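/- arXiv:2112.05431 — 2 statements merged into one kernel-verified Lean document; each statement's English description precedes it below -/
import Mathlib

section
/- For fixed integers a₀,b₀ ≥ 1 there is a constant C > 0 (depending only on a₀,b₀) such that for every α ∈ (0,1) and every integer n ≥ 1: |Σ_{0 ≤ l ≤ n, gcd(a₀+l, a₀+b₀+n) = 1} C(n,l)·α^l·(1−α)^{n−l} − Σ_{d | n+a₀+b₀} μ(d)/d| ≤ C/(√(α(1−α))·n^{1/4}). (The left sum equals E(I(Z_{α,n})), the probability that the α-random walk started at (a₀,b₀) is at a visible point at time n.) -/
/-!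
By Möbius inversion over the divisors `d` of `M = n + a₀ + b₀`, the probability in question
is `∑_{d ∣ M} μ(d) P(d ∣ a₀ + l)` with `l` binomially distributed. Summation by parts against
the weights `1_{d ∣ a₀ + l} - 1/d`, whose partial sums stay in `[-1, 1]`, bounds
`|P(d ∣ a₀ + l) - 1/d|` by the total variation of the unimodal binomial distribution, i.e.
twice its mode weight, and Stirling's formula makes that weight `O(1/√(nα(1-α)))`. Summing over
the `τ(M) = O(M^{1/4})` divisors of `M` gives the estimate.
-/

open Finset Real
open scoped Nat ArithmeticFunction.Moebius

theorem succ_pow_four_le_mul_two_pow (e : ℕ) : (e + 1) ^ 4 ≤ 41 * 2 ^ e := by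
  induction e with
  | zero => norm_num
  | succ e ih =>
    rcases le_or_gt e 4 with he | he
    · interval_cases e <;> norm_num
    · calc (e + 1 + 1) ^ 4 ≤ 2 * (e + 1) ^ 4 := by nlinarith [Nat.mul_le_mul he he]
        _ ≤ 41 * 2 ^ (e + 1) := by rw [pow_succ 2]; linarith

theorem succ_pow_four_le_sixteen_pow {e : ℕ} (he : 1 ≤ e) : (e + 1) ^ 4 ≤ 16 ^ e := by
  induction e, he using Nat.le_induction with
  | base => norm_num
  | succ e _ ih =>
    calc (e + 1 + 1) ^ 4 ≤ (2 * (e + 1)) ^ 4 := by gcongr; omega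
      _ = 16 * (e + 1) ^ 4 := by ring
      _ ≤ 16 ^ (e + 1) := by rw [pow_succ 16]; linarith

theorem card_divisors_pow_four_le {m : ℕ} (hm : m ≠ 0) : #m.divisors ^ 4 ≤ 41 ^ 6 * m := by
  -- only the six primes below `16` can have `(e + 1) ^ 4 > p ^ e`
  have hlocal : ∀ p ∈ m.primeFactors,
      (m.factorization p + 1) ^ 4 ≤ (if p < 16 then 41 else 1) * p ^ m.factorization p := by
    intro p hp
    have hp2 := (Nat.prime_of_mem_primeFactors hp).two_le
    split_ifs with h16
    · exact (succ_pow_four_le_mul_two_pow _).trans (by gcongr)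
    · rw [one_mul]
      refine (succ_pow_four_le_sixteen_pow ?_).trans (by gcongr; omega)
      exact (Nat.prime_of_mem_primeFactors hp).factorization_pos_of_dvd hm
        (Nat.dvd_of_mem_primeFactors hp)
  have hsmall : #{p ∈ m.primeFactors | p < 16} ≤ 6 := by
    have hsub : {p ∈ m.primeFactors | p < 16} ⊆ {p ∈ range 16 | p.Prime} := by
      intro p hp
      simp only [mem_filter, Nat.mem_primeFactors, mem_range] at hp ⊢
      exact ⟨hp.2, hp.1.1⟩
    exact (card_le_card hsub).trans (by decide)
  calc #m.divisors ^ 4 = ∏ p ∈ m.primeFactors, (m.factorization p + 1) ^ 4 := by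
        rw [Nat.card_divisors hm, prod_pow]
    _ ≤ ∏ p ∈ m.primeFactors, (if p < 16 then 41 else 1) * p ^ m.factorization p :=
        prod_le_prod' hlocal
    _ = 41 ^ #{p ∈ m.primeFactors | p < 16} * m := by
        rw [prod_mul_distrib, ← Nat.prod_primeFactors_pow_factorization hm, prod_ite,
          prod_const, prod_const_one, mul_one]
    _ ≤ 41 ^ 6 * m := by gcongr; norm_num

theorem card_divisors_add_le (a : ℕ) {n : ℕ} (hn : 0 < n) :
    (#(n + a).divisors : ℝ) ≤ 41 ^ 2 * (1 + a) * (n : ℝ) ^ (1 / 4 : ℝ) := by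
  have hpow : ((n : ℝ) ^ (1 / 4 : ℝ)) ^ 4 = n := by
    rw [← rpow_natCast, ← rpow_mul (Nat.cast_nonneg n)]
    norm_num
  have htau : (#(n + a).divisors : ℝ) ^ 4 ≤ 41 ^ 6 * (n + a) := by
    exact_mod_cast card_divisors_pow_four_le (by omega : n + a ≠ 0)
  have hn1 : (1 : ℝ) ≤ n := by exact_mod_cast hn
  have ha : (1 : ℝ) + a ≤ (1 + a) ^ 4 :=
    le_self_pow₀ (by linarith [a.cast_nonneg (α := ℝ)]) (by norm_num)
  refine le_of_pow_le_pow_left₀ (n := 4) (by norm_num) (by positivity) ?_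
  rw [mul_pow, mul_pow, hpow]
  nlinarith [a.cast_nonneg (α := ℝ)]

theorem sum_divisors_moebius (k : ℕ) :
    ∑ d ∈ k.divisors, (μ d : ℝ) = if k = 1 then 1 else 0 := by
  have h := congrArg (· k) (ArithmeticFunction.coe_moebius_mul_coe_zeta (R := ℝ))
  simp only [ArithmeticFunction.coe_mul_zeta_apply, ArithmeticFunction.one_apply,
    ArithmeticFunction.intCoe_apply] at h
  exact h

theorem sum_filter_gcd_eq_one_eq_sum_moebius {ι : Type*} (s : Finset ι) (f : ι → ℕ)
    (c : ι → ℝ) {M : ℕ} (hM : M ≠ 0) :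
    ∑ i ∈ s with (f i).gcd M = 1, c i =
      ∑ d ∈ M.divisors, (μ d : ℝ) * ∑ i ∈ s with d ∣ f i, c i := by
  have hdiv : ∀ i, {d ∈ M.divisors | d ∣ f i} = ((f i).gcd M).divisors := by
    intro i
    ext d
    simp only [mem_filter, Nat.mem_divisors, Nat.dvd_gcd_iff, ne_eq, Nat.gcd_eq_zero_iff, hM,
      and_false, not_false_eq_true, and_true]
    tauto
  calc ∑ i ∈ s with (f i).gcd M = 1, c i
      = ∑ i ∈ s, c i * ∑ d ∈ ((f i).gcd M).divisors, (μ d : ℝ) := by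
        simp only [sum_divisors_moebius, mul_ite, mul_one, mul_zero, sum_ite, sum_const_zero,
          add_zero]
    _ = ∑ d ∈ M.divisors, (μ d : ℝ) * ∑ i ∈ s with d ∣ f i, c i := by
        simp only [← hdiv, sum_filter, mul_sum, mul_ite, mul_zero]
        rw [sum_comm]
        simp only [mul_comm]

theorem abs_sum_moebius_mul_sub_sum_moebius_div_le (M : ℕ) (S : ℕ → ℝ) {ε : ℝ}
    (hS : ∀ d ∈ M.divisors, |S d - 1 / d| ≤ ε) :
    |∑ d ∈ M.divisors, (μ d : ℝ) * S d - ∑ d ∈ M.divisors, (μ d : ℝ) / d| ≤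
      #M.divisors * ε := by
  rw [← sum_sub_distrib, ← nsmul_eq_mul, ← sum_const]
  refine (abs_sum_le_sum_abs _ _).trans (sum_le_sum fun d hd ↦ ?_)
  rw [← mul_one_div, ← mul_sub, abs_mul]
  have hμ : |(μ d : ℝ)| ≤ 1 := by exact_mod_cast ArithmeticFunction.abs_moebius_le_one
  exact (mul_le_of_le_one_left (abs_nonneg _) hμ).trans (hS d hd)

theorem abs_sum_mul_le_sum_abs_sub_of_abs_partial_sum_le (c w : ℕ → ℝ) (n : ℕ)
    (hc : c (n + 1) = 0) (hw : ∀ k, |∑ i ∈ range k, w i| ≤ 1) :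
    |∑ i ∈ range (n + 1), c i * w i| ≤ ∑ i ∈ range (n + 1), |c (i + 1) - c i| := by
  have hbound : ∀ x k, |x * ∑ i ∈ range k, w i| ≤ |x| := fun x k ↦ by
    simpa [abs_mul] using mul_le_mul_of_nonneg_left (hw k) (abs_nonneg x)
  have hparts := sum_range_by_parts c w (n + 1)
  simp only [smul_eq_mul, add_tsub_cancel_right] at hparts
  rw [hparts, sum_range_succ (fun i ↦ |c (i + 1) - c i|), hc, zero_sub, abs_neg]
  refine (abs_sub _ _).trans ?_
  rw [add_comm]
  exact add_le_add ((abs_sum_le_sum_abs _ _).trans (sum_le_sum fun i _ ↦ hbound _ _)) (hbound _ _)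

theorem dvd_add_iff_modEq {a d l : ℕ} (hd : 0 < d) : d ∣ a + l ↔ l ≡ d - a % d [MOD d] := by
  have hzero : a + (d - a % d) ≡ 0 [MOD d] := by
    refine Nat.modEq_zero_iff_dvd.2 ⟨a / d + 1, ?_⟩
    have := Nat.mod_lt a hd
    have := Nat.div_add_mod a d
    rw [mul_add, mul_one]
    omega
  constructor
  · exact fun h ↦ Nat.ModEq.add_left_cancel' a ((Nat.modEq_zero_iff_dvd.2 h).trans hzero.symm)
  · exact fun h ↦ Nat.modEq_zero_iff_dvd.1 ((h.add_left a).trans hzero)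

theorem abs_card_filter_dvd_add_sub_le (a : ℕ) {d : ℕ} (hd : 0 < d) (k : ℕ) :
    |(#{l ∈ range k | d ∣ a + l} : ℝ) - k / d| ≤ 1 := by
  have hcard :
      #{l ∈ range k | d ∣ a + l} = k / d + if (d - a % d) % d < k % d then 1 else 0 := by
    simp_rw [dvd_add_iff_modEq hd, ← Nat.count_eq_card_filter_range]
    exact Nat.count_modEq_card _ hd _
  have hfloor : ((k / d : ℕ) : ℝ) ≤ (k : ℝ) / d ∧ (k : ℝ) / d < (k / d : ℕ) + 1 := by
    rw [← Nat.floor_div_eq_div (K := ℝ)]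
    exact ⟨Nat.floor_le (by positivity), Nat.lt_floor_add_one _⟩
  rw [hcard, abs_le]
  split_ifs <;> push_cast <;> constructor <;> linarith

theorem abs_sum_filter_dvd_add_sub_le (c : ℕ → ℝ) (a : ℕ) {d : ℕ} (hd : 0 < d) (n : ℕ)
    (hc : c (n + 1) = 0) :
    |∑ l ∈ range (n + 1) with d ∣ a + l, c l - (∑ l ∈ range (n + 1), c l) / d| ≤
      ∑ l ∈ range (n + 1), |c (l + 1) - c l| := by
  have hw : ∀ k, |∑ l ∈ range k, ((if d ∣ a + l then 1 else 0) - 1 / (d : ℝ))| ≤ 1 := by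
    intro k
    simpa [sum_sub_distrib, sum_boole, div_eq_mul_inv] using abs_card_filter_dvd_add_sub_le a hd k
  convert abs_sum_mul_le_sum_abs_sub_of_abs_partial_sum_le c _ n hc hw using 2
  simp [mul_sub, sum_sub_distrib, sum_filter, sum_mul, div_eq_mul_inv]

theorem factorial_le_stirling {n : ℕ} (hn : n ≠ 0) :
    (n ! : ℝ) ≤ exp 1 * √n * (n / exp 1) ^ n := by
  obtain ⟨k, rfl⟩ := Nat.exists_eq_succ_of_ne_zero hn
  have hmono : Stirling.stirlingSeq (k + 1) ≤ Stirling.stirlingSeq 1 :=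
    Stirling.stirlingSeq'_antitone (Nat.zero_le k)
  rw [Stirling.stirlingSeq_one, Stirling.stirlingSeq, div_le_iff₀ (by positivity)] at hmono
  calc ((k + 1) ! : ℝ)
      ≤ exp 1 / √2 * (√(2 * (k + 1 : ℕ)) * ((k + 1 : ℕ) / exp 1) ^ (k + 1)) := hmono
    _ = exp 1 * √(k + 1 : ℕ) * ((k + 1 : ℕ) / exp 1) ^ (k + 1) := by
        rw [sqrt_mul zero_le_two]
        field_simp

theorem pow_mul_pow_mul_add_pow_le {x y : ℝ} (hx : 0 ≤ x) (hy : 0 ≤ y) {k m : ℕ}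
    (hk : 0 < k) (hm : 0 < m) :
    x ^ k * y ^ m * ((k + m : ℕ) : ℝ) ^ (k + m) ≤
      (k : ℝ) ^ k * (m : ℝ) ^ m * (x + y) ^ (k + m) := by
  set N : ℝ := ((k + m : ℕ) : ℝ) with hN
  have hk0 : (0 : ℝ) < k := Nat.cast_pos.2 hk
  have hm0 : (0 : ℝ) < m := Nat.cast_pos.2 hm
  have hN0 : 0 < N := by rw [hN]; push_cast; positivity
  have hw : k / N + m / N = 1 := by rw [← add_div, div_eq_one_iff_eq hN0.ne', hN]; push_cast; rfl
  -- weighted AM–GM with weights `k / N` and `m / N`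
  have amgm := geom_mean_le_arith_mean2_weighted (p₁ := x * N / k) (p₂ := y * N / m)
    (by positivity) (by positivity) (by positivity) (by positivity) hw
  have hsum : k / N * (x * N / k) + m / N * (y * N / m) = x + y := by field_simp
  rw [hsum] at amgm
  have hpow := pow_le_pow_left₀ (by positivity) amgm (k + m)
  rw [mul_pow, ← rpow_natCast, ← rpow_natCast (_ ^ _), ← rpow_mul (by positivity),
    ← rpow_mul (by positivity), ← hN, div_mul_cancel₀ _ hN0.ne', div_mul_cancel₀ _ hN0.ne',
    rpow_natCast, rpow_natCast, div_pow, div_pow, mul_pow, mul_pow, _root_.div_mul_div_comm,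
    div_le_iff₀ (by positivity)] at hpow
  calc x ^ k * y ^ m * N ^ (k + m) = x ^ k * N ^ k * (y ^ m * N ^ m) := by ring
    _ ≤ (x + y) ^ (k + m) * (k ^ k * m ^ m) := hpow
    _ = _ := by ring

theorem add_choose_mul_pow_mul_pow_le {k m : ℕ} (hk : 0 < k) (hm : 0 < m) {α : ℝ}
    (h0 : 0 ≤ α) (h1 : α ≤ 1) :
    ((k + m).choose k : ℝ) * α ^ k * (1 - α) ^ m ≤
      exp 1 / (2 * π) * √((k + m) / (k * m)) := by
  have hk0 : (0 : ℝ) < k := Nat.cast_pos.2 hk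
  have hm0 : (0 : ℝ) < m := Nat.cast_pos.2 hm
  have hent := pow_mul_pow_mul_add_pow_le h0 (sub_nonneg.2 h1) hk hm
  rw [add_sub_cancel, one_pow, mul_one] at hent
  have hchoose : ((k + m).choose k : ℝ) ≤
      exp 1 * √(k + m : ℕ) * ((k + m : ℕ) / exp 1) ^ (k + m) /
        (√(2 * π * k) * (k / exp 1) ^ k * (√(2 * π * m) * (m / exp 1) ^ m)) := by
    rw [Nat.cast_add_choose]
    gcongr
    · exact factorial_le_stirling (by omega)
    · exact Stirling.le_factorial_stirling k
    · exact Stirling.le_factorial_stirling m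
  have hsplit : exp 1 * √(k + m : ℕ) * ((k + m : ℕ) / exp 1) ^ (k + m) /
      (√(2 * π * k) * (k / exp 1) ^ k * (√(2 * π * m) * (m / exp 1) ^ m)) =
      exp 1 / (2 * π) * √((k + m) / (k * m)) *
        (((k + m : ℕ) : ℝ) ^ (k + m) / (k ^ k * m ^ m)) := by
    have hπ : √(2 * π * k) * √(2 * π * m) = 2 * π * √(k * m) := by
      rw [← sqrt_mul (by positivity),
        show 2 * π * k * (2 * π * m) = (2 * π) ^ 2 * (k * m) by ring,
        sqrt_mul (by positivity), sqrt_sq (by positivity)]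
    rw [show √(2 * π * k) * (k / exp 1) ^ k * (√(2 * π * m) * (m / exp 1) ^ m) =
      √(2 * π * k) * √(2 * π * m) * ((k / exp 1) ^ k * (m / exp 1) ^ m) by ring, hπ,
      sqrt_div (by positivity), div_pow, div_pow, div_pow, pow_add (exp 1)]
    push_cast
    field_simp
  calc ((k + m).choose k : ℝ) * α ^ k * (1 - α) ^ m
      = ((k + m).choose k : ℝ) * (α ^ k * (1 - α) ^ m) := mul_assoc _ _ _
    _ ≤ exp 1 / (2 * π) * √((k + m) / (k * m)) *
          (((k + m : ℕ) : ℝ) ^ (k + m) / (k ^ k * m ^ m)) * (α ^ k * (1 - α) ^ m) := by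
        rw [← hsplit]; gcongr
    _ ≤ exp 1 / (2 * π) * √((k + m) / (k * m)) * 1 := by
        rw [mul_assoc]
        gcongr
        rw [div_mul_eq_mul_div, div_le_one (by positivity)]
        linarith
    _ = exp 1 / (2 * π) * √((k + m) / (k * m)) := mul_one _

theorem sum_abs_sub_eq_of_unimodal (c : ℕ → ℝ) {m N : ℕ} (hmN : m ≤ N)
    (hup : ∀ k < m, c k ≤ c (k + 1)) (hdown : ∀ k, m ≤ k → c (k + 1) ≤ c k) :
    ∑ k ∈ range N, |c (k + 1) - c k| = 2 * c m - c 0 - c N := by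
  have hleft : ∑ k ∈ range m, |c (k + 1) - c k| = c m - c 0 := by
    rw [← sum_range_sub]
    exact sum_congr rfl fun k hk ↦ abs_of_nonneg (sub_nonneg.2 (hup k (mem_range.1 hk)))
  have hright : ∑ k ∈ Ico m N, |c (k + 1) - c k| = c m - c N := by
    rw [← neg_sub, ← sum_Ico_sub c hmN, ← sum_neg_distrib]
    exact sum_congr rfl fun k hk ↦ abs_of_nonpos (sub_nonpos.2 (hdown k (mem_Ico.1 hk).1))
  rw [← sum_range_add_sum_Ico _ hmN, hleft, hright]
  ring

noncomputable def binomialWeight (n : ℕ) (α : ℝ) (k : ℕ) : ℝ :=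
  n.choose k * α ^ k * (1 - α) ^ (n - k)

noncomputable def binomialMode (n : ℕ) (α : ℝ) : ℕ :=
  ⌊α * ((n : ℝ) + 1)⌋₊

section binomialWeight

variable {n : ℕ} {α : ℝ}

theorem binomialWeight_nonneg (h0 : 0 ≤ α) (h1 : α ≤ 1) (k : ℕ) :
    0 ≤ binomialWeight n α k := by
  have := sub_nonneg.2 h1
  unfold binomialWeight
  positivity

theorem binomialWeight_eq_zero_of_lt {k : ℕ} (hk : n < k) : binomialWeight n α k = 0 := by
  simp [binomialWeight, Nat.choose_eq_zero_of_lt hk]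

theorem sum_binomialWeight : ∑ k ∈ range (n + 1), binomialWeight n α k = 1 := by
  have h := add_pow α (1 - α) n
  rw [add_sub_cancel, one_pow] at h
  rw [h]
  exact sum_congr rfl fun k _ ↦ by unfold binomialWeight; ring

theorem binomialWeight_succ_mul (k : ℕ) :
    binomialWeight n α (k + 1) * ((k + 1) * (1 - α)) =
      binomialWeight n α k * (α * (n - k)) := by
  rcases lt_or_ge k n with hk | hk
  · have hchoose : (n.choose (k + 1) : ℝ) * (k + 1) = n.choose k * (n - k) := by
      rw [← Nat.cast_sub hk.le]; exact_mod_cast Nat.choose_succ_right_eq n k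
    obtain ⟨j, hj⟩ : ∃ j, n - k = j + 1 := ⟨n - (k + 1), by omega⟩
    rw [binomialWeight, binomialWeight, hj, show n - (k + 1) = j by omega]
    linear_combination α ^ (k + 1) * (1 - α) ^ (j + 1) * hchoose
  · rcases hk.eq_or_lt with rfl | hk
    · simp [binomialWeight_eq_zero_of_lt (Nat.lt_succ_self n)]
    · simp [binomialWeight_eq_zero_of_lt hk,
        binomialWeight_eq_zero_of_lt (hk.trans k.lt_succ_self)]

theorem binomialWeight_le_succ (h0 : 0 ≤ α) (h1 : α < 1) {k : ℕ} (hk : k + 1 ≤ α * (n + 1)) :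
    binomialWeight n α k ≤ binomialWeight n α (k + 1) := by
  have hpos : 0 < (k + 1 : ℝ) * (1 - α) := by have := sub_pos.2 h1; positivity
  refine le_of_mul_le_mul_right ?_ hpos
  rw [binomialWeight_succ_mul]
  exact mul_le_mul_of_nonneg_left (by linarith) (binomialWeight_nonneg h0 h1.le k)

theorem binomialWeight_succ_le (h0 : 0 ≤ α) (h1 : α < 1) {k : ℕ} (hk : α * (n + 1) ≤ k + 1) :
    binomialWeight n α (k + 1) ≤ binomialWeight n α k := by
  have hpos : 0 < (k + 1 : ℝ) * (1 - α) := by have := sub_pos.2 h1; positivity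
  refine le_of_mul_le_mul_right ?_ hpos
  rw [binomialWeight_succ_mul]
  exact mul_le_mul_of_nonneg_left (by linarith) (binomialWeight_nonneg h0 h1.le k)

theorem binomialMode_le (h0 : 0 ≤ α) (h1 : α < 1) : binomialMode n α ≤ n := by
  have : α * (n + 1) < n + 1 := by nlinarith
  have := (Nat.floor_lt (by positivity)).2 (by exact_mod_cast this : α * (n + 1) < (n + 1 : ℕ))
  unfold binomialMode
  omega

theorem sum_abs_binomialWeight_sub_le (h0 : 0 ≤ α) (h1 : α < 1) :
    ∑ k ∈ range (n + 1), |binomialWeight n α (k + 1) - binomialWeight n α k| ≤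
      2 * binomialWeight n α (binomialMode n α) := by
  rw [sum_abs_sub_eq_of_unimodal _ ((binomialMode_le h0 h1).trans n.le_succ)]
  · linarith [binomialWeight_nonneg (n := n) h0 h1.le 0,
      binomialWeight_nonneg (n := n) h0 h1.le (n + 1)]
  · intro k hk
    have : (k + 1 : ℝ) ≤ binomialMode n α := by exact_mod_cast hk
    exact binomialWeight_le_succ h0 h1 (this.trans (Nat.floor_le (by positivity)))
  · intro k hk
    have : (binomialMode n α : ℝ) ≤ k := by exact_mod_cast hk
    have hfloor : α * (n + 1) < binomialMode n α + 1 := Nat.lt_floor_add_one _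
    exact binomialWeight_succ_le h0 h1 (by linarith)

theorem le_binomialMode_mul_sub (h0 : 0 < α) (h1 : α < 1) (hαn : 4 < α * n)
    (hqn : 4 < (1 - α) * n) :
    9 / 16 * (α * (1 - α)) * n ^ 2 ≤ binomialMode n α * (n - binomialMode n α) := by
  have hm_lo : α * (n + 1) - 1 < binomialMode n α := Nat.sub_one_lt_floor _
  have hm_hi : (binomialMode n α : ℝ) ≤ α * (n + 1) := Nat.floor_le (by positivity)
  have hm : 3 / 4 * (α * n) < binomialMode n α := by linarith
  have hj : 3 / 4 * ((1 - α) * n) < n - binomialMode n α := by linarith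
  nlinarith [mul_lt_mul'' hm hj (by positivity) (by linarith)]

theorem binomialWeight_binomialMode_le (hn : 0 < n) (h0 : 0 < α) (h1 : α < 1) :
    binomialWeight n α (binomialMode n α) ≤ 2 / √(n * (α * (1 - α))) := by
  set x := (n : ℝ) * (α * (1 - α)) with hx
  have hq : 0 < 1 - α := sub_pos.2 h1
  have hx0 : 0 < x := by positivity
  have hmn := binomialMode_le (n := n) h0.le h1
  rcases le_or_gt x 4 with hsmall | hlarge
  · have hb1 : binomialWeight n α (binomialMode n α) ≤ 1 :=
      sum_binomialWeight (n := n) (α := α) ▸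
        single_le_sum (fun k _ ↦ binomialWeight_nonneg h0.le h1.le k) (mem_range.2 (by omega))
    have hsqrt : √x ≤ 2 := (sqrt_le_left zero_le_two).2 (by linarith)
    rw [le_div_iff₀ (sqrt_pos.2 hx0)]
    nlinarith [sqrt_nonneg x]
  · have hprod := le_binomialMode_mul_sub h0 h1 (by nlinarith) (by nlinarith)
    set m := binomialMode n α
    obtain ⟨j, hnj⟩ := Nat.exists_eq_add_of_le hmn
    have hnj' : (n : ℝ) = m + j := by exact_mod_cast hnj
    have hpos : 0 < (m : ℝ) * (n - m) := lt_of_lt_of_le (by positivity) hprod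
    rw [hnj', add_sub_cancel_left] at hpos hprod
    rw [hnj'] at hx
    have hm0 : 0 < m := Nat.pos_of_ne_zero fun h ↦ by simp [h] at hpos
    have hj0 : 0 < j := Nat.pos_of_ne_zero fun h ↦ by simp [h] at hpos
    have hsqrt : √((m + j) / (m * j)) ≤ (4 / 3) / √x := by
      rw [sqrt_le_left (by positivity), div_pow, sq_sqrt hx0.le,
        div_le_div_iff₀ (by positivity) hx0, hx]
      nlinarith
    have hconst : exp 1 / (2 * π) * (4 / 3) ≤ 2 := by
      rw [div_mul_eq_mul_div, div_le_iff₀ (by positivity)]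
      nlinarith [exp_one_lt_d9, pi_gt_three]
    calc binomialWeight n α m
        = ((m + j).choose m : ℝ) * α ^ m * (1 - α) ^ j := by
          rw [binomialWeight, hnj, Nat.add_sub_cancel_left]
      _ ≤ exp 1 / (2 * π) * √((m + j) / (m * j)) :=
          add_choose_mul_pow_mul_pow_le hm0 hj0 h0.le h1.le
      _ ≤ exp 1 / (2 * π) * ((4 / 3) / √x) := by gcongr
      _ ≤ 2 / √x := by rw [← mul_div_assoc]; gcongr

theorem abs_sum_filter_dvd_binomialWeight_sub_le (a : ℕ) {d : ℕ} (hd : 0 < d) (hn : 0 < n)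
    (h0 : 0 < α) (h1 : α < 1) :
    |∑ l ∈ range (n + 1) with d ∣ a + l, binomialWeight n α l - 1 / d| ≤
      4 / √(n * (α * (1 - α))) := by
  have hres := abs_sum_filter_dvd_add_sub_le (binomialWeight n α) a hd n
    (binomialWeight_eq_zero_of_lt n.lt_succ_self)
  rw [sum_binomialWeight] at hres
  have htwice : 2 * (2 / √(n * (α * (1 - α)))) = 4 / √(n * (α * (1 - α))) := by ring
  linarith [sum_abs_binomialWeight_sub_le (n := n) h0.le h1,
    binomialWeight_binomialMode_le hn h0 h1]

end binomialWeight

theorem alpha_walk_mean_visibility_estimate_general (a0 b0 : ℕ) :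
    ∃ C : ℝ, 0 < C ∧
      ∀ (α : ℝ), 0 < α → α < 1 →
      ∀ (n : ℕ), 1 ≤ n →
        |(∑ l ∈ (Finset.range (n + 1)).filter
              (fun l => Nat.gcd (a0 + l) (a0 + b0 + n) = 1),
            (n.choose l : ℝ) * α ^ l * (1 - α) ^ (n - l)) -
          ∑ d ∈ (n + a0 + b0).divisors, (ArithmeticFunction.moebius d : ℝ) / (d : ℝ)|
          ≤ C / (Real.sqrt (α * (1 - α)) * (n : ℝ) ^ ((1 : ℝ) / 4)) := by
  refine ⟨4 * 41 ^ 2 * (1 + (a0 + b0 : ℕ)), by positivity, fun α h0 h1 n hn ↦ ?_⟩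
  have hsieve := sum_filter_gcd_eq_one_eq_sum_moebius (range (n + 1)) (a0 + ·)
    (binomialWeight n α) (by omega : n + a0 + b0 ≠ 0)
  have hαq : 0 < √(α * (1 - α)) := sqrt_pos.2 (mul_pos h0 (sub_pos.2 h1))
  have hsqrt : √(n * (α * (1 - α))) =
      √(α * (1 - α)) * ((n : ℝ) ^ (1 / 4 : ℝ) * (n : ℝ) ^ (1 / 4 : ℝ)) := by
    rw [← rpow_add (by positivity), sqrt_mul (by positivity), sqrt_eq_rpow, mul_comm]
    norm_num
  calc _ = |∑ d ∈ (n + a0 + b0).divisors, (μ d : ℝ) *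
          ∑ l ∈ range (n + 1) with d ∣ a0 + l, binomialWeight n α l -
          ∑ d ∈ (n + a0 + b0).divisors, (μ d : ℝ) / d| := by
        rw [← hsieve, show a0 + b0 + n = n + a0 + b0 by omega]; rfl
    _ ≤ #(n + a0 + b0).divisors * (4 / √(n * (α * (1 - α)))) :=
        abs_sum_moebius_mul_sub_sum_moebius_div_le _ _ fun d hd ↦
          abs_sum_filter_dvd_binomialWeight_sub_le a0 (Nat.pos_of_mem_divisors hd) hn h0 h1
    _ ≤ 41 ^ 2 * (1 + (a0 + b0 : ℕ)) * (n : ℝ) ^ (1 / 4 : ℝ) *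
          (4 / √(n * (α * (1 - α)))) := by
        gcongr
        rw [add_assoc]
        exact card_divisors_add_le (a0 + b0) hn
    _ = _ := by
        rw [hsqrt]
        field_simp

/-- **Mean visibility of the `α`-random walk at time `n`.**  For fixed `a₀, b₀ ≥ 1`
there is a constant `C > 0` (independent of `α`) such that for every `α ∈ (0,1)` and
every `n ≥ 1`, the probability that the `α`-random walk started at `(a₀,b₀)` is at a
visible point at time `n`, namely
`∑_{0 ≤ l ≤ n, gcd(a₀+l, a₀+b₀+n)=1} C(n,l)α^l(1−α)^{n−l}`, differs from
`∑_{d ∣ n+a₀+b₀} μ(d)/d` by at most `C/(√(α(1−α))·n^{1/4})`. -/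
theorem alpha_walk_mean_visibility_estimate (a0 b0 : ℕ) (ha : 1 ≤ a0) (hb : 1 ≤ b0) :
    ∃ C : ℝ, 0 < C ∧
      ∀ (α : ℝ), 0 < α → α < 1 →
      ∀ (n : ℕ), 1 ≤ n →
        |(∑ l ∈ (Finset.range (n + 1)).filter
              (fun l => Nat.gcd (a0 + l) (a0 + b0 + n) = 1),
            (n.choose l : ℝ) * α ^ l * (1 - α) ^ (n - l)) -
          ∑ d ∈ (n + a0 + b0).divisors, (ArithmeticFunction.moebius d : ℝ) / (d : ℝ)|
          ≤ C / (Real.sqrt (α * (1 - α)) * (n : ℝ) ^ ((1 : ℝ) / 4)) :=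
  alpha_walk_mean_visibility_estimate_general a0 b0
end

section
/- For all integers a₀, b₀, r₀, u₀ ≥ 1: lim_{N→∞} (1/N²)·#{(n,m) : 0 ≤ n,m ≤ N and gcd(a₀ + n·r₀, b₀ + m·u₀) = 1} = Δ(a₀,b₀;r₀,u₀), where Δ(a₀,b₀;r₀,u₀) = Σ_{d ≥ 1, gcd(d,r₀) | a₀ and gcd(d,u₀) | b₀} (μ(d)/d²)·gcd(d,r₀)·gcd(d,u₀). -/
/-!
Möbius inversion turns the indicator of `gcd(a₀ + n r₀, b₀ + m u₀) = 1` into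
`∑_d μ(d) [d ∣ a₀ + n r₀] [d ∣ b₀ + m u₀]`, so the count factors as `∑_d μ(d) A_d(N) B_d(N)`,
where `A_d(N)` counts the `n ≤ N` with `d ∣ a₀ + n r₀`. That condition is a single congruence
modulo `d / gcd(d, r₀)` when `gcd(d, r₀) ∣ a₀` and is never met otherwise, so `A_d(N) / N` tends
to `gcd(d, r₀) / d` or to `0`. Since the values `a₀ + n r₀` are distinct multiples of `d` in
`(0, a₀ + N r₀]`, also `A_d(N) / N ≤ (a₀ + r₀) / d`; the `d`-th term is thus dominated by
`(a₀ + r₀)(b₀ + u₀) / d²`, and dominated convergence for series gives the limit.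
-/

open Filter Finset ArithmeticFunction Topology
open scoped ArithmeticFunction.Moebius

lemma exists_dvd_add_mul_iff_modEq {d r a : ℕ} (hd : 0 < d) (h : d.gcd r ∣ a) :
    ∃ v, ∀ n, d ∣ a + n * r ↔ n ≡ v [MOD d / d.gcd r] := by
  set g := d.gcd r
  set q := d / g
  obtain ⟨a', rfl⟩ := h
  have hg : 0 < g := Nat.gcd_pos_of_pos_left r hd
  have hq : 0 < q := Nat.div_pos (Nat.gcd_le_left r hd) hg
  have : NeZero q := ⟨hq.ne'⟩
  have hcop : Nat.Coprime (r / g) q := (Nat.coprime_div_gcd_div_gcd hg).symm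
  let u := ZMod.unitOfCoprime (r / g) hcop
  obtain ⟨v, hv⟩ :=
    ZMod.natCast_zmod_surjective (-(a' : ZMod q) * ((u⁻¹ : (ZMod q)ˣ) : ZMod q))
  refine ⟨v, fun n => ?_⟩
  -- With `d = g * q`, `r = g * r'` and `q` coprime to `r'`, the condition reads
  -- `a' + n * r' = 0` in `ZMod q`.
  have hdq : d = g * q := (Nat.mul_div_cancel' (Nat.gcd_dvd_left d r)).symm
  have hrg : r = g * (r / g) := (Nat.mul_div_cancel' (Nat.gcd_dvd_right d r)).symm
  have hsplit : g * a' + n * r = g * (a' + n * (r / g)) := by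
    conv_lhs => rw [hrg]
    ring
  rw [← ZMod.natCast_eq_natCast_iff, hv, hsplit, hdq, Nat.mul_dvd_mul_iff_left hg,
    ← ZMod.natCast_eq_zero_iff, Units.eq_mul_inv_iff_mul_eq, ZMod.coe_unitOfCoprime,
    eq_neg_iff_add_eq_zero, add_comm]
  push_cast
  rfl

lemma abs_count_modEq_sub_div_le_one {q : ℕ} (hq : 0 < q) (v b : ℕ) :
    |(Nat.count (· ≡ v [MOD q]) b : ℝ) - b / q| ≤ 1 := by
  have hfloor : ((b / q : ℕ) : ℝ) = ⌊(b : ℝ) / q⌋₊ := by rw [Nat.floor_div_eq_div]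
  have h1 : ((b / q : ℕ) : ℝ) ≤ b / q := hfloor ▸ Nat.floor_le (by positivity)
  have h2 : (b : ℝ) / q < (b / q : ℕ) + 1 := hfloor ▸ Nat.lt_floor_add_one _
  rw [Nat.count_modEq_card _ hq, abs_le]
  split_ifs <;> push_cast <;> constructor <;> linarith

lemma tendsto_div_of_abs_sub_mul_le {c : ℕ → ℝ} {ρ C : ℝ}
    (h : ∀ N : ℕ, |c N - N * ρ| ≤ C) :
    Tendsto (fun N : ℕ => c N / N) atTop (𝓝 ρ) := by
  rw [tendsto_iff_norm_sub_tendsto_zero]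
  refine squeeze_zero' (Eventually.of_forall fun _ => norm_nonneg _) ?_
    (tendsto_const_div_atTop_nhds_zero_nat C)
  filter_upwards [eventually_gt_atTop 0] with N hN
  have hN' : (0 : ℝ) < N := Nat.cast_pos.mpr hN
  rw [Real.norm_eq_abs, div_sub' hN'.ne', abs_div, abs_of_pos hN']
  exact div_le_div_of_nonneg_right (h N) hN'.le

/-- The density of `{n | d ∣ a + n * r}`: when `gcd d r ∣ a` this set is one residue class
modulo `d / gcd d r`, and otherwise it is empty. -/
noncomputable def dvdAddMulDensity (d a r : ℕ) : ℝ :=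
  if d.gcd r ∣ a then (d.gcd r : ℝ) / d else 0

lemma not_dvd_add_mul_of_not_gcd_dvd {d r a : ℕ} (h : ¬ d.gcd r ∣ a) (n : ℕ) :
    ¬ d ∣ a + n * r := fun hd =>
  h <| (Nat.dvd_add_left (dvd_mul_of_dvd_right (Nat.gcd_dvd_right d r) n)).mp
    ((Nat.gcd_dvd_left d r).trans hd)

lemma tendsto_count_dvd_add_mul_div {d r a : ℕ} (hd : 0 < d) :
    Tendsto (fun N : ℕ => (Nat.count (fun n => d ∣ a + n * r) (N + 1) : ℝ) / N) atTop
      (𝓝 (dvdAddMulDensity d a r)) := by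
  unfold dvdAddMulDensity
  split_ifs with h
  · obtain ⟨v, hv⟩ := exists_dvd_add_mul_iff_modEq hd h
    set q := d / d.gcd r
    have hq : 0 < q := Nat.div_pos (Nat.gcd_le_left r hd) (Nat.gcd_pos_of_pos_left r hd)
    have hρ : (d.gcd r : ℝ) / d = 1 / q := by
      rw [Nat.cast_div (Nat.gcd_dvd_left d r) (by positivity), one_div_div]
    rw [hρ]
    refine tendsto_div_of_abs_sub_mul_le (C := 1 + 1 / q) fun N => ?_
    have hcount := abs_count_modEq_sub_div_le_one hq v (N + 1)
    simp only [← hv] at hcount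
    calc _ = |(Nat.count (fun n => d ∣ a + n * r) (N + 1) - (N + 1 : ℕ) / q : ℝ) + 1 / q| :=
          by congr 1; push_cast; ring
      _ ≤ _ := (abs_add_le _ _).trans (add_le_add hcount (abs_of_pos (by positivity)).le)
  · have hfalse : (fun n => d ∣ a + n * r) = fun _ => False :=
      funext fun n => eq_false (not_dvd_add_mul_of_not_gcd_dvd h n)
    simp [hfalse]

lemma count_dvd_add_mul_le {d r a : ℕ} (ha : 0 < a) (hr : 0 < r) (N : ℕ) :
    Nat.count (fun n => d ∣ a + n * r) (N + 1) ≤ (a + N * r) / d := by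
  rw [Nat.count_eq_card_filter_range, ← Nat.Ioc_filter_dvd_card_eq_div]
  refine Finset.card_le_card_of_injOn (fun n => a + n * r) (fun n hn => ?_) fun m _ n _ h => ?_
  · simp only [coe_filter, mem_range, Set.mem_ofPred_eq, mem_Ioc] at hn ⊢
    exact ⟨⟨by positivity, by gcongr; omega⟩, hn.2⟩
  · simpa [hr.ne'] using h

lemma count_dvd_add_mul_div_le {d r a N : ℕ} (ha : 0 < a) (hr : 0 < r) (hN : 0 < N) :
    (Nat.count (fun n => d ∣ a + n * r) (N + 1) : ℝ) / N ≤ (a + r) / d := by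
  have hN' : (1 : ℝ) ≤ N := by exact_mod_cast hN
  rw [div_le_iff₀ (by positivity), div_mul_eq_mul_div]
  calc (Nat.count (fun n => d ∣ a + n * r) (N + 1) : ℝ)
      ≤ ((a + N * r) / d : ℕ) := by exact_mod_cast count_dvd_add_mul_le ha hr N
    _ ≤ (a + N * r : ℕ) / d := Nat.cast_div_le
    _ ≤ (a + r) * N / d := by
      gcongr
      push_cast
      nlinarith

lemma ite_coprime_eq_sum_moebius {A B M : ℕ} (hA : 0 < A) (hAM : A ≤ M) :
    (if A.Coprime B then 1 else 0 : ℤ) =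
      ∑ d ∈ range (M + 1), μ d * (if d ∣ A then 1 else 0) * (if d ∣ B then 1 else 0) := by
  have hdiv : {d ∈ range (M + 1) | d ∣ A ∧ d ∣ B} = (A.gcd B).divisors := by
    ext d
    simp only [mem_filter, mem_range, Nat.mem_divisors, Nat.dvd_gcd_iff,
      (Nat.gcd_pos_of_pos_left B hA).ne', ne_eq, not_false_eq_true, and_true]
    exact and_iff_right_of_imp fun h => Nat.lt_succ_of_le ((Nat.le_of_dvd hA h.1).trans hAM)
  simp_rw [mul_assoc, ite_zero_mul_ite_zero, mul_one, mul_boole]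
  rw [← sum_filter, hdiv, ← coe_mul_zeta_apply, moebius_mul_coe_zeta, one_apply]

lemma card_filter_coprime_eq_sum_moebius (s t : Finset ℕ) (f g : ℕ → ℕ) {M : ℕ}
    (hf : ∀ x ∈ s, 0 < f x ∧ f x ≤ M) :
    (#{p ∈ s ×ˢ t | (f p.1).Coprime (g p.2)} : ℤ) =
      ∑ d ∈ range (M + 1), μ d * #{x ∈ s | d ∣ f x} * #{y ∈ t | d ∣ g y} := by
  rw [natCast_card_filter, sum_product]
  calc ∑ x ∈ s, ∑ y ∈ t, (if (f x).Coprime (g y) then 1 else 0 : ℤ)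
      = ∑ x ∈ s, ∑ y ∈ t, ∑ d ∈ range (M + 1),
          μ d * (if d ∣ f x then 1 else 0) * (if d ∣ g y then 1 else 0) :=
        sum_congr rfl fun x hx => sum_congr rfl fun y _ =>
          ite_coprime_eq_sum_moebius (hf x hx).1 (hf x hx).2
    _ = ∑ x ∈ s, ∑ d ∈ range (M + 1), ∑ y ∈ t,
          μ d * (if d ∣ f x then 1 else 0) * (if d ∣ g y then 1 else 0) :=
        sum_congr rfl fun _ _ => sum_comm
    _ = _ := by
      rw [sum_comm]
      simp_rw [natCast_card_filter, mul_assoc, sum_mul_sum, mul_sum]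

lemma card_coprime_div_sq_eq_tsum {a b r u : ℕ} (ha : 0 < a) (hr : 0 < r) (N : ℕ) :
    (#{p ∈ range (N + 1) ×ˢ range (N + 1) | (a + p.1 * r).Coprime (b + p.2 * u)} : ℝ) /
        N ^ 2 =
      ∑' d, μ d * ((Nat.count (fun n => d ∣ a + n * r) (N + 1) : ℝ) / N) *
        ((Nat.count (fun m => d ∣ b + m * u) (N + 1) : ℝ) / N) := by
  have hsum := card_filter_coprime_eq_sum_moebius (range (N + 1)) (range (N + 1))
    (a + · * r) (b + · * u) (M := a + N * r)
    fun n hn => ⟨by positivity, by gcongr; exact Nat.lt_succ_iff.mp (mem_range.mp hn)⟩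
  rw [tsum_eq_sum (s := range (a + N * r + 1)) fun d hd => ?_]
  · rw [← Int.cast_natCast, hsum]
    push_cast
    rw [sum_div]
    refine sum_congr rfl fun d _ => ?_
    simp only [Nat.count_eq_card_filter_range]
    ring
  · have hlarge : (a + N * r) / d = 0 := Nat.div_eq_of_lt (by simpa using hd)
    have hcount : Nat.count (fun n => d ∣ a + n * r) (N + 1) = 0 :=
      Nat.eq_zero_of_le_zero (hlarge ▸ count_dvd_add_mul_le ha hr N)
    simp [hcount]

lemma tendsto_moebius_mul_count_div_mul_count_div (a b r u d : ℕ) :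
    Tendsto (fun N : ℕ => μ d * ((Nat.count (fun n => d ∣ a + n * r) (N + 1) : ℝ) / N) *
        ((Nat.count (fun m => d ∣ b + m * u) (N + 1) : ℝ) / N)) atTop
      (𝓝 (μ d * dvdAddMulDensity d a r * dvdAddMulDensity d b u)) := by
  rcases Nat.eq_zero_or_pos d with rfl | hd
  · simp
  exact ((tendsto_count_dvd_add_mul_div hd).const_mul _).mul (tendsto_count_dvd_add_mul_div hd)

lemma norm_moebius_mul_count_div_mul_count_div_le {a b r u N : ℕ} (ha : 0 < a) (hb : 0 < b)
    (hr : 0 < r) (hu : 0 < u) (hN : 0 < N) (d : ℕ) :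
    ‖μ d * ((Nat.count (fun n => d ∣ a + n * r) (N + 1) : ℝ) / N) *
        ((Nat.count (fun m => d ∣ b + m * u) (N + 1) : ℝ) / N)‖ ≤
      (a + r) * (b + u) / d ^ 2 := by
  have hμ : |(μ d : ℝ)| ≤ 1 := by exact_mod_cast abs_moebius_le_one
  rw [norm_mul, norm_mul, Real.norm_eq_abs, Real.norm_of_nonneg (by positivity),
    Real.norm_of_nonneg (by positivity), mul_assoc]
  calc _ ≤ 1 * ((a + r) / d * ((b + u) / d) : ℝ) :=
        mul_le_mul hμ (mul_le_mul (count_dvd_add_mul_div_le ha hr hN)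
          (count_dvd_add_mul_div_le hb hu hN) (by positivity) (by positivity))
          (by positivity) zero_le_one
    _ = _ := by ring

/-- **A further extension of Dirichlet's density theorem.**  For all integers
`a₀, b₀, r₀, u₀ ≥ 1`, the density of pairs `(n,m)` with `0 ≤ n,m ≤ N` such that
`gcd(a₀+n·r₀, b₀+m·u₀) = 1` converges, as `N → ∞`, to
`Δ(a₀,b₀;r₀,u₀) = ∑_{d ≥ 1, gcd(d,r₀) ∣ a₀, gcd(d,u₀) ∣ b₀} (μ(d)/d²)·gcd(d,r₀)·gcd(d,u₀)`. -/
theorem density_visible_points_on_general_grid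
    (a0 b0 r0 u0 : ℕ) (ha : 1 ≤ a0) (hb : 1 ≤ b0) (hr : 1 ≤ r0) (hu : 1 ≤ u0) :
    Tendsto (fun N : ℕ =>
        (((Finset.range (N + 1) ×ˢ Finset.range (N + 1)).filter
            (fun p => Nat.gcd (a0 + p.1 * r0) (b0 + p.2 * u0) = 1)).card : ℝ) /
          (N : ℝ) ^ 2)
      atTop
      (nhds (∑' d : ℕ, if 1 ≤ d ∧ Nat.gcd d r0 ∣ a0 ∧ Nat.gcd d u0 ∣ b0 then
        (ArithmeticFunction.moebius d : ℝ) / (d : ℝ) ^ 2 *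
          (Nat.gcd d r0 : ℝ) * (Nat.gcd d u0 : ℝ) else 0)) := by
  have hbound : Summable fun d : ℕ => ((a0 : ℝ) + r0) * (b0 + u0) / d ^ 2 := by
    simpa [div_eq_mul_inv] using
      (Real.summable_nat_pow_inv.mpr one_lt_two).mul_left (((a0 : ℝ) + r0) * (b0 + u0))
  have hlim := tendsto_tsum_of_dominated_convergence hbound
    (tendsto_moebius_mul_count_div_mul_count_div a0 b0 r0 u0)
    ((eventually_gt_atTop 0).mono fun N hN =>
      norm_moebius_mul_count_div_mul_count_div_le ha hb hr hu hN)
  have hterm : ∀ d : ℕ, μ d * dvdAddMulDensity d a0 r0 * dvdAddMulDensity d b0 u0 =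
      if 1 ≤ d ∧ d.gcd r0 ∣ a0 ∧ d.gcd u0 ∣ b0 then
        (μ d : ℝ) / (d : ℝ) ^ 2 * (d.gcd r0 : ℝ) * (d.gcd u0 : ℝ) else 0 := by
    intro d
    rcases Nat.eq_zero_or_pos d with rfl | hd
    · simp [dvdAddMulDensity]
    have hd1 : 1 ≤ d := hd
    by_cases hra : d.gcd r0 ∣ a0 <;> by_cases hub : d.gcd u0 ∣ b0 <;>
      simp only [dvdAddMulDensity, hra, hub, hd1, and_true, and_false, if_true, if_false, mul_zero,
        zero_mul]
    ring
  simp only [hterm] at hlim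
  exact hlim.congr fun N => (card_coprime_div_sq_eq_tsum ha hr N).symm
end
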